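/- Let k be an algebraically closed field of characteristic zero, let s, t ≥ 1, let μ = (μ₁,…,μ_s) and ν = (ν₁,…,ν_t) be tuples of positive integers, and let p = x^μ − y^ν in k[x₁,…,x_s,y₁,…,y_t]. Suppose F ∈ k[x₁,…,x_s,y₁,…,y_t] divides p and is semi-invariant under all root-of-unity scalings of the variables: for each index i ∈ {1,…,s} and each μ_i-th root of unity ζ ∈ k, the k-algebra automorphism sending x_i to ζ·x_i and fixing all other variables sends F to c·F for some c ∈ k^×, and likewise for each index j ∈ {1,…,t} and each ν_j-th root of unity ζ ∈ k, the automorphism sending y_j to ζ·y_j and fixing all other variables sends F to c·F for some c ∈ k^×. Then F lies in the k-subalgebra k[x₁^{μ₁},…,x_s^{μ_s},y₁^{ν₁},…,y_t^{ν_t}] of k[x₁,…,x_s,y₁,…,y_t]; that is, F is genuinely invariant under all these automorphisms. -/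

import Mathlib

/-!
Scaling the variable `w` by `ζ` multiplies the coefficient of the monomial `d` by `ζ ^ d w`, so
if `F` is semi-invariant with factor `c` for a primitive `m`-th root of unity `ζ`, then
`ζ ^ d w = c` for every monomial `d` of `F`. As `F` divides `x^μ - y^ν`, which has a monomial
not involving `w`, so does `F`; hence `c = 1`, and `m` divides the `w`-exponent of every
monomial of `F`.
-/

namespace MvPolynomial

section Scaling

variable {R σ : Type*} [CommSemiring R] [DecidableEq σ]

noncomputable def scaleVar (w₀ : σ) (ζ : R) : MvPolynomial σ R →ₐ[R] MvPolynomial σ R :=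
  aeval fun w => if w = w₀ then C ζ * X w else X w

theorem scaleVar_monomial (w₀ : σ) (ζ : R) (u : σ →₀ ℕ) (a : R) :
    scaleVar w₀ ζ (monomial u a) = C (ζ ^ u w₀) * monomial u a := by
  have hdiag : (fun w => if w = w₀ then C ζ * X w else (X w : MvPolynomial σ R)) =
      fun w => C (if w = w₀ then ζ else 1) * X w := by
    ext1 w
    split_ifs <;> simp
  rw [scaleVar, hdiag, aeval_monomial, monomial_eq, algebraMap_eq]
  simp only [mul_pow, Finsupp.prod_mul, ← map_pow, ite_pow, one_pow, ← map_finsuppProd C,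
    Finsupp.prod_ite_eq']
  split_ifs with h
  · ring
  · rw [Finsupp.notMem_support_iff.mp h, pow_zero, map_one]; ring

theorem coeff_scaleVar (w₀ : σ) (ζ : R) (F : MvPolynomial σ R) (d : σ →₀ ℕ) :
    coeff d (scaleVar w₀ ζ F) = ζ ^ d w₀ * coeff d F := by
  induction F using MvPolynomial.induction_on' with
  | monomial u a =>
    rw [scaleVar_monomial, coeff_C_mul, coeff_monomial]
    split_ifs with h
    · rw [h]
    · rw [mul_zero, mul_zero]
  | add p q hp hq => rw [map_add, coeff_add, coeff_add, hp, hq, mul_add]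

theorem scaleVar_eq_self {w₀ : σ} {ζ : R} {m : ℕ} (hζ : ζ ^ m = 1) {F : MvPolynomial σ R}
    (hF : ∀ d ∈ F.support, m ∣ d w₀) : scaleVar w₀ ζ F = F := by
  ext d
  rw [coeff_scaleVar]
  by_cases hd : d ∈ F.support
  · obtain ⟨q, hq⟩ := hF d hd
    rw [hq, pow_mul, hζ, one_pow, one_mul]
  · rw [notMem_support_iff.mp hd, mul_zero]

theorem dvd_of_scaleVar_eq_C_mul {K : Type*} [Field K] {w₀ : σ} {ζ : K} {m : ℕ}
    (hζ : IsPrimitiveRoot ζ m) {F : MvPolynomial σ K} {c : K} (hF : scaleVar w₀ ζ F = C c * F)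
    (h₀ : ∃ d ∈ F.support, d w₀ = 0) : ∀ d ∈ F.support, m ∣ d w₀ := by
  have hc : ∀ d ∈ F.support, ζ ^ d w₀ = c := fun d hd =>
    mul_right_cancel₀ (mem_support_iff.mp hd) <| by
      rw [← coeff_scaleVar, hF, coeff_C_mul]
  obtain ⟨d₀, hd₀, hd₀w⟩ := h₀
  intro d hd
  rw [← hζ.pow_eq_one_iff_dvd, hc d hd, ← hc d₀ hd₀, hd₀w, pow_zero]

end Scaling

variable {R σ : Type*} [CommSemiring R]

theorem exists_mem_support_apply_eq_zero_of_dvd {F p : MvPolynomial σ R} {w₀ : σ}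
    (h : F ∣ p) (hp : ∃ d ∈ p.support, d w₀ = 0) : ∃ d ∈ F.support, d w₀ = 0 := by
  classical
  obtain ⟨G, rfl⟩ := h
  obtain ⟨d, hd, hdw⟩ := hp
  obtain ⟨a, ha, b, -, rfl⟩ := Finset.mem_add.mp (support_mul F G hd)
  exact ⟨a, ha, Nat.eq_zero_of_add_eq_zero_right hdw⟩

theorem mem_adjoin_range_X_pow {e : σ → ℕ} {F : MvPolynomial σ R}
    (hF : ∀ d ∈ F.support, ∀ w, e w ∣ d w) :
    F ∈ Algebra.adjoin R (Set.range fun w => X w ^ e w) := by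
  rw [F.as_sum]
  refine Subalgebra.sum_mem _ fun d hd => ?_
  rw [monomial_eq]
  refine Subalgebra.mul_mem _ (Subalgebra.algebraMap_mem _ _) (Subalgebra.prod_mem _ fun w _ => ?_)
  obtain ⟨q, hq⟩ := hF d hd w
  simp only [hq, pow_mul]
  exact Subalgebra.pow_mem _ (Algebra.subset_adjoin (Set.mem_range_self w)) q

theorem prod_X_pow_eq_monomial_sum {ι : Type*} (s : Finset ι) (f : ι → σ) (n : ι → ℕ) :
    ∏ i ∈ s, (X (f i) : MvPolynomial σ R) ^ n i =
      monomial (∑ i ∈ s, Finsupp.single (f i) (n i)) 1 := by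
  simp only [monomial_sum_one, X_pow_eq_monomial]

theorem exists_mem_support_monomial_sub_monomial {R : Type*} [CommRing R] [Nontrivial R]
    {a b : σ →₀ ℕ} (hab : a ≠ b) {w₀ : σ} (h : a w₀ = 0 ∨ b w₀ = 0) :
    ∃ d ∈ (monomial a (1 : R) - monomial b 1).support, d w₀ = 0 := by
  classical
  rcases h with h | h
  · exact ⟨a, by simp [coeff_monomial, hab.symm], h⟩
  · exact ⟨b, by simp [coeff_monomial, hab], h⟩

theorem exists_mem_support_prod_X_pow_sub_prod_X_pow {R ι κ : Type*} [CommRing R]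
    [Nontrivial R] [Fintype ι] [Fintype κ] {μ : ι → ℕ} {ν : κ → ℕ} (hμ : ∀ i, 0 < μ i)
    (hν : ∀ j, 0 < ν j) (w : ι ⊕ κ) :
    ∃ d ∈ ((∏ i, X (Sum.inl i) ^ μ i) -
      ∏ j, (X (Sum.inr j) : MvPolynomial (ι ⊕ κ) R) ^ ν j).support, d w = 0 := by
  classical
  simp only [prod_X_pow_eq_monomial_sum]
  refine exists_mem_support_monomial_sub_monomial (fun h => ?_) ?_
  · have hw := DFunLike.congr_fun h w
    cases w with
    | inl i => exact (hμ i).ne' (by simpa [Finsupp.single_apply] using hw)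
    | inr j => exact (hν j).ne' (by simpa [Finsupp.single_apply] using hw.symm)
  · cases w <;> simp [Finsupp.single_apply]

end MvPolynomial

open MvPolynomial

theorem stmt_4_general {k : Type*} [Field k] [IsAlgClosed k] [CharZero k]
    (s t : ℕ)
    (μ : Fin s → ℕ) (ν : Fin t → ℕ)
    (hμ : ∀ i, 0 < μ i) (hν : ∀ j, 0 < ν j)
    (F : MvPolynomial (Fin s ⊕ Fin t) k)
    (hdvd : F ∣ ((∏ i : Fin s, X (Sum.inl i) ^ μ i) - ∏ j : Fin t, X (Sum.inr j) ^ ν j))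
    (hx : ∀ (i : Fin s) (ζ : k), ζ ^ μ i = 1 →
      ∃ c : k, c ≠ 0 ∧
        aeval (fun w : Fin s ⊕ Fin t =>
          if w = Sum.inl i then C ζ * X w else (X w : MvPolynomial (Fin s ⊕ Fin t) k)) F
          = C c * F)
    (hy : ∀ (j : Fin t) (ζ : k), ζ ^ ν j = 1 →
      ∃ c : k, c ≠ 0 ∧
        aeval (fun w : Fin s ⊕ Fin t =>
          if w = Sum.inr j then C ζ * X w else (X w : MvPolynomial (Fin s ⊕ Fin t) k)) F
          = C c * F) :
    F ∈ Algebra.adjoin k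
        ((Set.range fun i : Fin s =>
            (X (Sum.inl i) : MvPolynomial (Fin s ⊕ Fin t) k) ^ μ i) ∪
          (Set.range fun j : Fin t =>
            (X (Sum.inr j) : MvPolynomial (Fin s ⊕ Fin t) k) ^ ν j))
    ∧ (∀ (i : Fin s) (ζ : k), ζ ^ μ i = 1 →
        aeval (fun w : Fin s ⊕ Fin t =>
          if w = Sum.inl i then C ζ * X w else (X w : MvPolynomial (Fin s ⊕ Fin t) k)) F
          = F)
    ∧ (∀ (j : Fin t) (ζ : k), ζ ^ ν j = 1 →
        aeval (fun w : Fin s ⊕ Fin t =>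
          if w = Sum.inr j then C ζ * X w else (X w : MvPolynomial (Fin s ⊕ Fin t) k)) F
          = F) := by
  set e : Fin s ⊕ Fin t → ℕ := Sum.elim μ ν
  have he : ∀ w, 0 < e w := by
    rintro (i | j)
    exacts [hμ i, hν j]
  have hsemi : ∀ w (ζ : k), ζ ^ e w = 1 → ∃ c : k, c ≠ 0 ∧ scaleVar w ζ F = C c * F := by
    rintro (i | j) ζ hζ
    exacts [hx i ζ hζ, hy j ζ hζ]
  have hdiv : ∀ d ∈ F.support, ∀ w, e w ∣ d w := by
    intro d hd w
    have : NeZero (e w) := ⟨(he w).ne'⟩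
    obtain ⟨ζ, hζ⟩ := HasEnoughRootsOfUnity.exists_primitiveRoot k (e w)
    obtain ⟨c, -, hc⟩ := hsemi w ζ hζ.pow_eq_one
    exact dvd_of_scaleVar_eq_C_mul hζ hc (exists_mem_support_apply_eq_zero_of_dvd hdvd
      (exists_mem_support_prod_X_pow_sub_prod_X_pow hμ hν w)) d hd
  refine ⟨?_, fun i ζ hζ => scaleVar_eq_self hζ fun d hd => hdiv d hd (.inl i),
    fun j ζ hζ => scaleVar_eq_self hζ fun d hd => hdiv d hd (.inr j)⟩
  rw [← Set.Sum.elim_range]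
  convert mem_adjoin_range_X_pow hdiv using 3
  ext (i | j) <;> rfl

/-- Let `p = x^μ − y^ν` in `k[x₁,…,x_s,y₁,…,y_t]` over an algebraically closed field `k`
of characteristic zero. If `F ∣ p` and `F` is semi-invariant (up to a nonzero scalar)
under every root-of-unity scaling of a single variable (`x_i ↦ ζ·x_i` for `ζ^{μ_i} = 1`,
resp. `y_j ↦ ζ·y_j` for `ζ^{ν_j} = 1`), then `F` lies in the subalgebra
`k[x₁^{μ₁},…,x_s^{μ_s},y₁^{ν₁},…,y_t^{ν_t}]`; that is, `F` is genuinely invariant under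
all these automorphisms. -/
theorem stmt_4 {k : Type*} [Field k] [IsAlgClosed k] [CharZero k]
    (s t : ℕ) (hs : 1 ≤ s) (ht : 1 ≤ t)
    (μ : Fin s → ℕ) (ν : Fin t → ℕ)
    (hμ : ∀ i, 0 < μ i) (hν : ∀ j, 0 < ν j)
    (F : MvPolynomial (Fin s ⊕ Fin t) k)
    (hdvd : F ∣ ((∏ i : Fin s, X (Sum.inl i) ^ μ i) - ∏ j : Fin t, X (Sum.inr j) ^ ν j))
    (hx : ∀ (i : Fin s) (ζ : k), ζ ^ μ i = 1 →
      ∃ c : k, c ≠ 0 ∧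
        aeval (fun w : Fin s ⊕ Fin t =>
          if w = Sum.inl i then C ζ * X w else (X w : MvPolynomial (Fin s ⊕ Fin t) k)) F
          = C c * F)
    (hy : ∀ (j : Fin t) (ζ : k), ζ ^ ν j = 1 →
      ∃ c : k, c ≠ 0 ∧
        aeval (fun w : Fin s ⊕ Fin t =>
          if w = Sum.inr j then C ζ * X w else (X w : MvPolynomial (Fin s ⊕ Fin t) k)) F
          = C c * F) :
    F ∈ Algebra.adjoin k
        ((Set.range fun i : Fin s =>
            (X (Sum.inl i) : MvPolynomial (Fin s ⊕ Fin t) k) ^ μ i) ∪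
          (Set.range fun j : Fin t =>
            (X (Sum.inr j) : MvPolynomial (Fin s ⊕ Fin t) k) ^ ν j))
    ∧ (∀ (i : Fin s) (ζ : k), ζ ^ μ i = 1 →
        aeval (fun w : Fin s ⊕ Fin t =>
          if w = Sum.inl i then C ζ * X w else (X w : MvPolynomial (Fin s ⊕ Fin t) k)) F
          = F)
    ∧ (∀ (j : Fin t) (ζ : k), ζ ^ ν j = 1 →
        aeval (fun w : Fin s ⊕ Fin t =>
          if w = Sum.inr j then C ζ * X w else (X w : MvPolynomial (Fin s ⊕ Fin t) k)) F
          = F) :=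
  stmt_4_general s t μ ν hμ hν F hdvd hx hy
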